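/- arXiv:1403.5808 — 2 statements merged into one kernel-verified Lean document; each statement's English description precedes it below -/
import Mathlib

section
/- Let q be a prime power and let k, d, n be integers with 2 ≤ k ≤ q − 1 and 0 ≤ d < n. Suppose that for every k-tuple (h_1, …, h_k) of polynomials in F_q[t] such that every h_i has degree exactly d and every difference h_i − h_j (i ≠ j) has degree exactly d, there exists f ∈ F_q[t] of degree n such that at least two of the polynomials f + h_1, …, f + h_k are monic and irreducible. Then the number of polynomials g ∈ F_q[t] of degree exactly d for which there exist monic irreducible polynomials f_1, f_2 ∈ F_q[t] of degree n with f_1 − f_2 = g is at least (1/(k−1) − 1/(q−1)) · q^d · (q−1). -/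
/-!
Let `G` be the set of gaps of degree `d`, and suppose `G` is too small. A greedy choice then
produces `k` polynomials of degree `d` whose pairwise differences have degree `d` and avoid `G`:
each chosen `x` only excludes the `q ^ d` polynomials `y` with `deg (y - x) < d` and the
`|G|` polynomials in `x + G`, and `(k - 1) (q ^ d + |G|) < q ^ d (q - 1)` leaves room for
the next choice. The hypothesis gives `f` with `f + h i`, `f + h j` monic irreducible of
degree `n`, so `h i - h j ∈ G`, a contradiction.
-/

open Polynomial Pointwise

section Greedy

variable {A : Type*} [AddCommGroup A]

theorem exists_finset_card_eq_pairwise_sub_notMem [DecidableEq A] (S B : Finset A) (hB₀ : 0 ∈ B)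
    (hB_neg : ∀ b ∈ B, -b ∈ B) :
    ∀ {k : ℕ}, (k - 1) * B.card < S.card →
      ∃ s ⊆ S, s.card = k ∧ (s : Set A).Pairwise fun x y => x - y ∉ B
  | 0, _ => ⟨∅, by simp⟩
  | k + 1, hk => by
    obtain ⟨s, hsS, hsk, hs⟩ := exists_finset_card_eq_pairwise_sub_notMem S B hB₀ hB_neg
      (k := k) ((Nat.mul_le_mul_right _ (Nat.sub_le k 1)).trans_lt hk)
    have hsB : (s + B).card < S.card :=
      Finset.card_add_le.trans_lt (by simpa [hsk] using hk)
    obtain ⟨y, hyS, hysB⟩ := Finset.exists_mem_notMem_of_card_lt_card hsB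
    have hy : ∀ x ∈ s, y - x ∉ B := fun x hx hyx =>
      hysB (by simpa using Finset.add_mem_add hx hyx)
    have hys : y ∉ s := fun hys => hy y hys (by simpa using hB₀)
    refine ⟨insert y s, Finset.insert_subset hyS hsS,
      by rw [Finset.card_insert_of_notMem hys, hsk], ?_⟩
    rw [Finset.coe_insert, Set.pairwise_insert]
    refine ⟨hs, fun x hx _ => ⟨hy x hx, fun hxy => hy x hx ?_⟩⟩
    simpa using hB_neg _ hxy

theorem exists_pairwise_sub_notMem {S B : Set A} (hS : S.Finite) (hB : B.Finite) (hB₀ : 0 ∈ B)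
    (hB_neg : ∀ b ∈ B, -b ∈ B) {k : ℕ} (hk : (k - 1) * B.ncard < S.ncard) :
    ∃ h : Fin k → A, (∀ i, h i ∈ S) ∧ ∀ i j, i ≠ j → h i - h j ∉ B := by
  classical
  rw [Set.ncard_eq_toFinset_card B hB, Set.ncard_eq_toFinset_card S hS] at hk
  obtain ⟨s, hsS, hsk, hs⟩ := exists_finset_card_eq_pairwise_sub_notMem hS.toFinset hB.toFinset
    (by simpa using hB₀) (by simpa using hB_neg) hk
  let e := (s.equivFinOfCardEq hsk).symm
  refine ⟨fun i => e i, fun i => by simpa using hsS (e i).2, fun i j hij => ?_⟩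
  simpa using hs (e i).2 (e j).2 (Subtype.val_injective.ne (e.injective.ne hij))

end Greedy

theorem Polynomial.setOf_degree_eq {R : Type*} [Semiring R] (d : ℕ) :
    {p : R[X] | p.degree = d} = {p : R[X] | p.degree < ↑(d + 1)} \ {p : R[X] | p.degree < d} := by
  ext p
  rw [Set.mem_sdiff, Set.mem_ofPred_eq, Set.mem_ofPred_eq, Set.mem_ofPred_eq, ← mem_degreeLT,
    degreeLT_succ_eq_degreeLE, mem_degreeLE, not_lt, ← le_antisymm_iff]

section FiniteField

variable (F : Type*) [Field F] [Fintype F]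

theorem Polynomial.ncard_setOf_degree_lt (n : ℕ) :
    {p : F[X] | p.degree < n}.ncard = Fintype.card F ^ n := by
  have : {p : F[X] | p.degree < n} = degreeLT F n := by ext; exact mem_degreeLT.symm
  rw [this, ← Nat.card_coe_set_eq, SetLike.coe_sort_coe,
    Nat.card_congr (degreeLTEquiv F n).toEquiv]
  simp

theorem Polynomial.finite_setOf_degree_lt (n : ℕ) : {p : F[X] | p.degree < n}.Finite :=
  Set.finite_of_ncard_pos (by rw [ncard_setOf_degree_lt]; exact pow_pos Fintype.card_pos n)

theorem Polynomial.ncard_setOf_degree_eq (d : ℕ) :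
    {p : F[X] | p.degree = d}.ncard = Fintype.card F ^ d * (Fintype.card F - 1) := by
  have hsub : {p : F[X] | p.degree < d} ⊆ {p : F[X] | p.degree < ↑(d + 1)} := fun _ hp =>
    lt_trans hp (WithBot.coe_lt_coe.mpr d.lt_succ_self)
  rw [setOf_degree_eq, Set.ncard_sdiff hsub (finite_setOf_degree_lt F d), ncard_setOf_degree_lt,
    ncard_setOf_degree_lt, pow_succ, Nat.mul_sub_one]

theorem Polynomial.finite_setOf_degree_eq (d : ℕ) : {p : F[X] | p.degree = d}.Finite := by
  rw [setOf_degree_eq]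
  exact (finite_setOf_degree_lt F _).sdiff

end FiniteField

theorem sub_one_mul_add_lt_mul_sub_one {k q m g : ℕ} (hq : 2 ≤ q)
    (h : (g : ℝ) < (1 / (k - 1) - 1 / (q - 1)) * m * (q - 1)) :
    (k - 1) * (m + g) < m * (q - 1) := by
  have hq' : (0 : ℝ) < q - 1 := by
    have : (2 : ℝ) ≤ q := by exact_mod_cast hq
    linarith
  have hlt : (m + g : ℝ) < m * (q - 1) / (k - 1) := by
    have : (1 / (k - 1) - 1 / (q - 1)) * m * (q - 1) = (m * (q - 1) / (k - 1) - m : ℝ) := by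
      field_simp
    linarith
  obtain hk | hk := Nat.lt_or_ge k 2
  -- for `k ≤ 1` the hypothesis is void: `1 / (k - 1) ≤ 0`, also at `k = 1` where `1 / 0 = 0`
  · have : (m * (q - 1) / (k - 1) : ℝ) ≤ 0 := div_nonpos_of_nonneg_of_nonpos (by positivity)
      (by have : (k : ℝ) ≤ 1 := by exact_mod_cast Nat.le_of_lt_succ hk
          linarith)
    have : (0 : ℝ) ≤ m + g := by positivity
    linarith
  · have hk' : (0 : ℝ) < k - 1 := by
      have : (2 : ℝ) ≤ k := by exact_mod_cast hk
      linarith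
    rw [lt_div_iff₀ hk'] at hlt
    have : (((k - 1) * (m + g) : ℕ) : ℝ) < ((m * (q - 1) : ℕ) : ℝ) := by
      push_cast [Nat.cast_sub (by omega : 1 ≤ k), Nat.cast_sub (by omega : 1 ≤ q)]
      linarith
    exact_mod_cast this

def monicIrreducibleGaps (R : Type*) [Ring R] (n : ℕ) : Set R[X] :=
  {g | ∃ f₁ f₂ : R[X], f₁.Monic ∧ Irreducible f₁ ∧ f₁.natDegree = n ∧
    f₂.Monic ∧ Irreducible f₂ ∧ f₂.natDegree = n ∧ f₁ - f₂ = g}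

section Gaps

variable {R : Type*} [Ring R] {n : ℕ}

theorem neg_mem_monicIrreducibleGaps {g : R[X]} (hg : g ∈ monicIrreducibleGaps R n) :
    -g ∈ monicIrreducibleGaps R n := by
  obtain ⟨f₁, f₂, hm₁, hi₁, hd₁, hm₂, hi₂, hd₂, rfl⟩ := hg
  exact ⟨f₂, f₁, hm₂, hi₂, hd₂, hm₁, hi₁, hd₁, (neg_sub f₁ f₂).symm⟩

theorem sub_mem_monicIrreducibleGaps {f h₁ h₂ : R[X]} (hf : f.natDegree = n)
    (hh₁ : h₁.natDegree < n) (hh₂ : h₂.natDegree < n)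
    (hm₁ : (f + h₁).Monic) (hi₁ : Irreducible (f + h₁))
    (hm₂ : (f + h₂).Monic) (hi₂ : Irreducible (f + h₂)) :
    h₁ - h₂ ∈ monicIrreducibleGaps R n :=
  ⟨f + h₁, f + h₂,
    hm₁, hi₁, (natDegree_add_eq_left_of_natDegree_lt (hf ▸ hh₁)).trans hf,
    hm₂, hi₂, (natDegree_add_eq_left_of_natDegree_lt (hf ▸ hh₂)).trans hf, by abel⟩

end Gaps

theorem gap_counting_induction_step_general (F : Type*) [Field F] [Fintype F]
    (k d n : ℕ) (hdn : d < n)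
    (hyp : ∀ h : Fin k → Polynomial F,
      (∀ i, (h i).degree = (d : ℕ)) →
      (∀ i j, i ≠ j → (h i - h j).degree = (d : ℕ)) →
      ∃ f : Polynomial F, f.natDegree = n ∧
        2 ≤ {i : Fin k | (f + h i).Monic ∧ Irreducible (f + h i)}.ncard) :
    ((1 : ℝ) / (k - 1) - 1 / (Fintype.card F - 1)) * (Fintype.card F : ℝ) ^ d *
        ((Fintype.card F : ℝ) - 1) ≤
      ({g : Polynomial F | g.degree = (d : ℕ) ∧
        ∃ f₁ f₂ : Polynomial F,
          f₁.Monic ∧ Irreducible f₁ ∧ f₁.natDegree = n ∧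
          f₂.Monic ∧ Irreducible f₂ ∧ f₂.natDegree = n ∧
          f₁ - f₂ = g}.ncard : ℝ) := by
  change _ ≤ (({g : F[X] | g.degree = d ∧ g ∈ monicIrreducibleGaps F n}).ncard : ℝ)
  set G := {g : F[X] | g.degree = d ∧ g ∈ monicIrreducibleGaps F n}
  by_contra! hcon
  set B := {p : F[X] | p.degree < d} ∪ G
  have hS := finite_setOf_degree_eq F d
  have hB : B.Finite := (finite_setOf_degree_lt F d).union (hS.subset fun _ hg => hg.1)
  have hB_neg : ∀ b ∈ B, -b ∈ B := by
    rintro b (hb | ⟨hb, hbG⟩)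
    · exact Or.inl (by rwa [Set.mem_ofPred_eq, degree_neg])
    · exact Or.inr ⟨by rwa [degree_neg], neg_mem_monicIrreducibleGaps hbG⟩
  have hcard : (k - 1) * B.ncard < {p : F[X] | p.degree = d}.ncard := by
    calc (k - 1) * B.ncard ≤ (k - 1) * (Fintype.card F ^ d + G.ncard) := by
          gcongr; exact (Set.ncard_union_le _ _).trans_eq (by rw [ncard_setOf_degree_lt])
      _ < _ := sub_one_mul_add_lt_mul_sub_one Fintype.one_lt_card (by exact_mod_cast hcon)
      _ = _ := (ncard_setOf_degree_eq F d).symm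
  obtain ⟨h, hh_deg, hh_sub⟩ :=
    exists_pairwise_sub_notMem hS hB (Or.inl (by simp)) hB_neg hcard
  have hh_sub_deg : ∀ i j, i ≠ j → (h i - h j).degree = d := fun i j hij =>
    le_antisymm ((degree_sub_le _ _).trans (by rw [hh_deg i, hh_deg j, max_self]))
      (not_lt.mp fun hlt => hh_sub i j hij (Or.inl hlt))
  obtain ⟨f, hf, hf2⟩ := hyp h hh_deg hh_sub_deg
  obtain ⟨i, j, ⟨hmi, hii⟩, ⟨hmj, hij⟩, hne⟩ :=
    (Set.one_lt_ncard_iff (Set.toFinite _)).mp hf2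
  have hh_natDeg : ∀ l, (h l).natDegree < n := fun l =>
    (natDegree_eq_of_degree_eq_some (hh_deg l)).trans_lt hdn
  exact hh_sub i j hne (Or.inr ⟨hh_sub_deg i j hne,
    sub_mem_monicIrreducibleGaps hf (hh_natDeg i) (hh_natDeg j) hmi hii hmj hij⟩)

/-- **Gap-counting induction step** (from the proof of Theorem 1.4(ii)).
Let `q` be a prime power and `2 ≤ k ≤ q - 1`, `0 ≤ d < n`. Suppose that for every
`k`-tuple `(h 1, …, h k)` of polynomials of degree exactly `d` whose pairwise
differences all have degree exactly `d`, there is an `f` of degree `n` such that at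
least two of the `f + h i` are monic irreducible. Then the number of polynomials `g`
of degree exactly `d` occurring as differences of monic irreducibles of degree `n`
is at least `(1/(k-1) - 1/(q-1)) · q^d · (q-1)`. -/
theorem gap_counting_induction_step (F : Type*) [Field F] [Fintype F]
    (k d n : ℕ) (hk2 : 2 ≤ k) (hkq : k ≤ Fintype.card F - 1) (hdn : d < n)
    (hyp : ∀ h : Fin k → Polynomial F,
      (∀ i, (h i).degree = (d : ℕ)) →
      (∀ i j, i ≠ j → (h i - h j).degree = (d : ℕ)) →
      ∃ f : Polynomial F, f.natDegree = n ∧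
        2 ≤ {i : Fin k | (f + h i).Monic ∧ Irreducible (f + h i)}.ncard) :
    ((1 : ℝ) / (k - 1) - 1 / (Fintype.card F - 1)) * (Fintype.card F : ℝ) ^ d *
        ((Fintype.card F : ℝ) - 1) ≤
      ({g : Polynomial F | g.degree = (d : ℕ) ∧
        ∃ f₁ f₂ : Polynomial F,
          f₁.Monic ∧ Irreducible f₁ ∧ f₁.natDegree = n ∧
          f₂.Monic ∧ Irreducible f₂ ∧ f₂.natDegree = n ∧
          f₁ - f₂ = g}.ncard : ℝ) :=
  gap_counting_induction_step_general F k d n hdn hyp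
end

section
/- Let q be a prime power, let n > d ≥ 0 be integers with gcd(n − d, q − 1) = 1, and let c ∈ F_q be nonzero. If there exist monic irreducible polynomials f_1, f_2 ∈ F_q[t] of degree n with f_1 − f_2 = c·t^d, then for every nonzero a ∈ F_q there exist monic irreducible polynomials g_1, g_2 ∈ F_q[t] of degree n with g_1 − g_2 = a·t^d. -/
/-!
Replacing `f(t)` by `s^n f(t/s)`, i.e. `Polynomial.scaleRoots f s`, preserves monicity, degree
and (for `s` a unit) irreducibility, and turns a gap `c t^d` between two such polynomials of
degree `n` into `c s^(n-d) t^d`. Since `x ↦ x^(n-d)` permutes `𝔽_qˣ` when `gcd(n-d, q-1) = 1`,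
`s` can be chosen with `c s^(n-d) = a`.
-/

open Polynomial

namespace Polynomial

theorem scaleRoots_sub_scaleRoots_of_sub_eq_C_mul_X_pow {R : Type*} [CommRing R]
    {f g : R[X]} {c : R} {d : ℕ} (hdeg : f.natDegree = g.natDegree)
    (h : f - g = C c * X ^ d) (s : R) :
    f.scaleRoots s - g.scaleRoots s = C (c * s ^ (f.natDegree - d)) * X ^ d := by
  ext i
  have hi := congrArg (coeff · i) h
  simp only [coeff_sub, coeff_C_mul_X_pow] at hi
  simp only [coeff_sub, coeff_scaleRoots, coeff_C_mul_X_pow, ← hdeg, ← sub_mul, hi]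
  split_ifs with hid
  · rw [hid]
  · rw [zero_mul]

section NoZeroDivisors

variable {R : Type*} [CommRing R] [NoZeroDivisors R]

noncomputable def scaleRootsMulEquiv (u : Rˣ) : R[X] ≃* R[X] where
  toFun p := p.scaleRoots u
  invFun p := p.scaleRoots ↑u⁻¹
  left_inv p := by simp [← scaleRoots_mul]
  right_inv p := by simp [← scaleRoots_mul]
  map_mul' p q := mul_scaleRoots_of_noZeroDivisors p q u

theorem _root_.Irreducible.scaleRoots {p : R[X]} (hp : Irreducible p) {r : R} (hr : IsUnit r) :
    Irreducible (p.scaleRoots r) :=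
  hp.map (scaleRootsMulEquiv hr.unit)

end NoZeroDivisors

end Polynomial

theorem FiniteField.exists_unit_pow_eq {K : Type*} [Field K] [Fintype K] {k : ℕ}
    (hk : Nat.Coprime k (Fintype.card K - 1)) {b : K} (hb : b ≠ 0) :
    ∃ u : Kˣ, (u : K) ^ k = b := by
  have hcard : (Nat.card Kˣ).Coprime k := by
    rwa [Nat.card_units, Nat.card_eq_fintype_card, Nat.coprime_comm]
  obtain ⟨u, hu⟩ := (powCoprime hcard).surjective (Units.mk0 b hb)
  exact ⟨u, congrArg Units.val hu⟩

theorem monomial_gap_substitution_general (F : Type*) [Field F] [Fintype F]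
    (n d : ℕ) (hgcd : Nat.gcd (n - d) (Fintype.card F - 1) = 1)
    (c : F) (hc : c ≠ 0)
    (hex : ∃ f₁ f₂ : Polynomial F,
      f₁.Monic ∧ Irreducible f₁ ∧ f₁.natDegree = n ∧
      f₂.Monic ∧ Irreducible f₂ ∧ f₂.natDegree = n ∧
      f₁ - f₂ = Polynomial.C c * Polynomial.X ^ d) :
    ∀ a : F, a ≠ 0 →
    ∃ g₁ g₂ : Polynomial F,
      g₁.Monic ∧ Irreducible g₁ ∧ g₁.natDegree = n ∧
      g₂.Monic ∧ Irreducible g₂ ∧ g₂.natDegree = n ∧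
      g₁ - g₂ = Polynomial.C a * Polynomial.X ^ d := by
  intro a ha
  obtain ⟨f₁, f₂, hm₁, hi₁, hd₁, hm₂, hi₂, hd₂, hdiff⟩ := hex
  obtain ⟨s, hs⟩ := FiniteField.exists_unit_pow_eq hgcd (div_ne_zero ha hc)
  refine ⟨f₁.scaleRoots s, f₂.scaleRoots s, (monic_scaleRoots_iff _).mpr hm₁,
    hi₁.scaleRoots s.isUnit, (natDegree_scaleRoots _ _).trans hd₁,
    (monic_scaleRoots_iff _).mpr hm₂, hi₂.scaleRoots s.isUnit,
    (natDegree_scaleRoots _ _).trans hd₂, ?_⟩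
  rw [scaleRoots_sub_scaleRoots_of_sub_eq_C_mul_X_pow (hd₁.trans hd₂.symm) hdiff, hd₁, hs,
    mul_div_cancel₀ a hc]

/-- **Substitution lemma for monomial gaps** (from the proof of Theorem 1.4(i)).
Let `q` be a prime power, `n > d ≥ 0` with `gcd(n - d, q - 1) = 1`, and `c ∈ 𝔽_q`
nonzero. If `c·t^d` occurs as a difference of monic irreducibles of degree `n`, then
so does `a·t^d` for every nonzero `a ∈ 𝔽_q`. -/
theorem monomial_gap_substitution (F : Type*) [Field F] [Fintype F]
    (n d : ℕ) (hdn : d < n) (hgcd : Nat.gcd (n - d) (Fintype.card F - 1) = 1)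
    (c : F) (hc : c ≠ 0)
    (hex : ∃ f₁ f₂ : Polynomial F,
      f₁.Monic ∧ Irreducible f₁ ∧ f₁.natDegree = n ∧
      f₂.Monic ∧ Irreducible f₂ ∧ f₂.natDegree = n ∧
      f₁ - f₂ = Polynomial.C c * Polynomial.X ^ d) :
    ∀ a : F, a ≠ 0 →
    ∃ g₁ g₂ : Polynomial F,
      g₁.Monic ∧ Irreducible g₁ ∧ g₁.natDegree = n ∧
      g₂.Monic ∧ Irreducible g₂ ∧ g₂.natDegree = n ∧
      g₁ - g₂ = Polynomial.C a * Polynomial.X ^ d :=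
  monomial_gap_substitution_general F n d hgcd c hc hex
end
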